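/- arXiv:2012.06645 — 3 statements merged into one kernel-verified Lean document; each statement's English description precedes it below -/
import Mathlib

section
/- Let k, L, U, x₀ be real numbers and C > 0, and define the logistic duration D(r) = L + U/(1 + e^{-C(r - x₀)}) and the price function P(r) = k·e^{-L·r}·(1 + e^{C(r - x₀)})^{-U/C}. Then P is differentiable on ℝ and satisfies the duration differential equation P'(r) = -D(r)·P(r) for every r ∈ ℝ. -/
open Real

/-! The price is `k · e^{-L r} · g(C (r - x₀))` with `g(t) = (1 + e^t)^{-U/C}`, and
`g'(t) = -(U/C) · σ(t) · g(t)` where `σ(t) = e^t / (1 + e^t)` is the logistic function. After the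
chain-rule factor `C` the two factors contribute `-L` and `-U σ(C (r - x₀))` to the logarithmic
derivative, whose sum is `-D(r)`. -/

lemma Real.exp_div_one_add_exp (t : ℝ) : exp t / (1 + exp t) = sigmoid t := by
  rw [sigmoid_def, exp_neg]
  field

lemma hasDerivAt_one_add_exp_rpow (p t : ℝ) :
    HasDerivAt (fun t => (1 + exp t) ^ p) (p * sigmoid t * (1 + exp t) ^ p) t := by
  have hpos : 0 < 1 + exp t := by positivity
  convert ((hasDerivAt_exp t).const_add 1).rpow_const (p := p) (Or.inl hpos.ne') using 1
  rw [← exp_div_one_add_exp, rpow_sub hpos, rpow_one]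
  ring

lemma hasDerivAt_logistic_price (k L U x₀ : ℝ) {C : ℝ} (hC : C ≠ 0) (r : ℝ) :
    HasDerivAt (fun r => k * exp (-L * r) * (1 + exp (C * (r - x₀))) ^ (-U / C))
      (-(L + U * sigmoid (C * (r - x₀))) *
        (k * exp (-L * r) * (1 + exp (C * (r - x₀))) ^ (-U / C))) r := by
  have hdiscount : HasDerivAt (fun r => k * exp (-L * r)) (k * (exp (-L * r) * -L)) r := by
    simpa using (((hasDerivAt_id r).const_mul (-L)).exp).const_mul k
  have hinner : HasDerivAt (fun r => C * (r - x₀)) C r := by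
    simpa using ((hasDerivAt_id r).sub_const x₀).const_mul C
  have hlogistic := (hasDerivAt_one_add_exp_rpow (-U / C) (C * (r - x₀))).comp r hinner
  refine (hdiscount.mul hlogistic).congr_deriv ?_
  rw [Function.comp_apply]
  field

/-- The logistic-duration price function `P(r) = k·e^{-L·r}·(1 + e^{C(r - x₀)})^{-U/C}`
is differentiable and satisfies the duration differential equation
`P'(r) = -D(r)·P(r)` where `D(r) = L + U/(1 + e^{-C(r - x₀)})`. -/
theorem price_satisfies_duration_ode (k L U x₀ C : ℝ) (hC : 0 < C)
    (D P : ℝ → ℝ)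
    (hD : D = fun r => L + U / (1 + Real.exp (-C * (r - x₀))))
    (hP : P = fun r =>
      k * Real.exp (-L * r) * (1 + Real.exp (C * (r - x₀))) ^ (-U / C)) :
    Differentiable ℝ P ∧ ∀ r : ℝ, deriv P r = -D r * P r := by
  have hD' : D = fun r => L + U * sigmoid (C * (r - x₀)) := by
    simp only [hD, sigmoid_def, neg_mul, div_eq_mul_inv]
  subst hD' hP
  exact ⟨fun r => (hasDerivAt_logistic_price k L U x₀ hC.ne' r).differentiableAt,
    fun r => (hasDerivAt_logistic_price k L U x₀ hC.ne' r).deriv⟩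
end

section
/- Let r be a real random variable with Gaussian law of mean m and variance s² > 0, let a, b, c, d ∈ ℝ with (a, c) ≠ (0, 0), and set Y = e^{a·r + b} + e^{c·r + d}. With μ₁ = a·m + b, σ₁² = a²s², μ₂ = c·m + d, σ₂² = c²s², Cov = a·c·s², define σ_X² = log( (e^{2μ₁ + 2σ₁²} + 2·e^{μ₁ + μ₂ + (σ₁² + σ₂² + 2·Cov)/2} + e^{2μ₂ + 2σ₂²}) / (e^{μ₁ + σ₁²/2} + e^{μ₂ + σ₂²/2})² ) and μ_X = log(e^{μ₁ + σ₁²/2} + e^{μ₂ + σ₂²/2}) - σ_X²/2. Then σ_X² ≥ 0, and if X has law gaussianReal μ_X σ_X² and Z = e^X, the first two moments match: E[Z] = E[Y] and E[Z²] = E[Y²]. -/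
/-!
After expanding the square, `Y` and `Y²` are sums of terms `e^{t r + u}`, whose means are values
of the Gaussian moment generating function, `e^{t m + u + t² s²/2}`; this gives `E[Y]` and `E[Y²]`
as the two expressions inside the logarithms. The same formula gives `E[e^X] = e^{μ_X + σ_X²/2}`
and `E[e^{2X}] = e^{2μ_X + 2σ_X²}`, which the choice of `μ_X, σ_X²` makes equal to them.
Finally `σ_X² ≥ 0` amounts to `E[Y]² ≤ E[Y²]`.
-/

open MeasureTheory ProbabilityTheory Real NNReal

section GaussianExponentialMoments

variable {Ω : Type*} {mΩ : MeasurableSpace Ω} {P : Measure Ω} {r : Ω → ℝ} {m : ℝ} {v : ℝ≥0}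

lemma integral_exp_mul_add_of_map_eq_gaussianReal (hr : P.map r = gaussianReal m v) (t u : ℝ) :
    ∫ ω, exp (t * r ω + u) ∂P = exp (t * m + u + t ^ 2 * v / 2) := by
  simp_rw [exp_add, integral_mul_const]
  rw [← mgf, mgf_gaussianReal hr]
  simp only [← exp_add]
  ring_nf

lemma integrable_exp_mul_add_of_map_eq_gaussianReal (hr : P.map r = gaussianReal m v)
    (t u : ℝ) : Integrable (fun ω ↦ exp (t * r ω + u)) P :=
  .of_integral_ne_zero <| by
    rw [integral_exp_mul_add_of_map_eq_gaussianReal hr]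
    exact (exp_pos _).ne'

lemma integral_exp_add_exp_of_map_eq_gaussianReal (hr : P.map r = gaussianReal m v)
    (a b c d : ℝ) :
    ∫ ω, (exp (a * r ω + b) + exp (c * r ω + d)) ∂P =
      exp (a * m + b + a ^ 2 * v / 2) + exp (c * m + d + c ^ 2 * v / 2) := by
  rw [integral_add (integrable_exp_mul_add_of_map_eq_gaussianReal hr a b)
      (integrable_exp_mul_add_of_map_eq_gaussianReal hr c d),
    integral_exp_mul_add_of_map_eq_gaussianReal hr, integral_exp_mul_add_of_map_eq_gaussianReal hr]

lemma integral_exp_add_exp_sq_of_map_eq_gaussianReal (hr : P.map r = gaussianReal m v)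
    (a b c d : ℝ) :
    ∫ ω, (exp (a * r ω + b) + exp (c * r ω + d)) ^ 2 ∂P =
      exp (2 * (a * m + b) + 2 * (a ^ 2 * v)) +
        2 * exp (a * m + b + (c * m + d) + (a ^ 2 * v + c ^ 2 * v + 2 * (a * c * v)) / 2) +
        exp (2 * (c * m + d) + 2 * (c ^ 2 * v)) := by
  have hsq : ∀ ω, (exp (a * r ω + b) + exp (c * r ω + d)) ^ 2 =
      exp (2 * a * r ω + 2 * b) + 2 * exp ((a + c) * r ω + (b + d)) +
        exp (2 * c * r ω + 2 * d) := fun ω ↦ by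
    simp only [add_sq, ← exp_nat_mul, mul_assoc 2 (exp _), ← exp_add]
    ring_nf
  have hint := integrable_exp_mul_add_of_map_eq_gaussianReal hr (P := P)
  simp only [hsq]
  rw [integral_add ((hint _ _).fun_add ((hint _ _).const_mul 2)) (hint _ _),
    integral_add (hint _ _) ((hint _ _).const_mul 2), integral_const_mul]
  simp only [integral_exp_mul_add_of_map_eq_gaussianReal hr]
  ring_nf

end GaussianExponentialMoments

/-- With `p, q` the two exponentials on the left, the right side minus the left is at least
`(p x + q y)²`, by `1 + z ≤ exp z` applied to each of `x², x y, y²`. -/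
lemma exp_add_exp_sq_le (μ₁ μ₂ x y : ℝ) :
    (exp (μ₁ + x ^ 2 / 2) + exp (μ₂ + y ^ 2 / 2)) ^ 2 ≤
      exp (2 * μ₁ + 2 * x ^ 2) + 2 * exp (μ₁ + μ₂ + (x ^ 2 + y ^ 2 + 2 * (x * y)) / 2) +
        exp (2 * μ₂ + 2 * y ^ 2) := by
  set p := exp (μ₁ + x ^ 2 / 2)
  set q := exp (μ₂ + y ^ 2 / 2)
  have hp : exp (2 * μ₁ + 2 * x ^ 2) = p ^ 2 * exp (x ^ 2) := by
    rw [← exp_nat_mul, ← exp_add]; ring_nf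
  have hpq : exp (μ₁ + μ₂ + (x ^ 2 + y ^ 2 + 2 * (x * y)) / 2) = p * q * exp (x * y) := by
    rw [← exp_add, ← exp_add]; ring_nf
  have hq : exp (2 * μ₂ + 2 * y ^ 2) = q ^ 2 * exp (y ^ 2) := by
    rw [← exp_nat_mul, ← exp_add]; ring_nf
  rw [hp, hpq, hq]
  linarith [mul_le_mul_of_nonneg_left (add_one_le_exp (x * y)) (by positivity : 0 ≤ p * q),
    mul_le_mul_of_nonneg_left (add_one_le_exp (x ^ 2)) (sq_nonneg p),
    mul_le_mul_of_nonneg_left (add_one_le_exp (y ^ 2)) (sq_nonneg q), sq_nonneg (p * x + q * y)]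

lemma integral_exp_eq_and_integral_exp_sq_eq_of_map_eq_gaussianReal {Ω : Type*}
    {mΩ : MeasurableSpace Ω} {P : Measure Ω} {X : Ω → ℝ} {S Q : ℝ} (hS : 0 < S)
    (hSQ : S ^ 2 ≤ Q)
    (hX : P.map X = gaussianReal (log S - log (Q / S ^ 2) / 2) (log (Q / S ^ 2)).toNNReal) :
    ∫ ω, exp (X ω) ∂P = S ∧ ∫ ω, exp (X ω) ^ 2 ∂P = Q := by
  have hQS : 0 < Q / S ^ 2 := div_pos (by nlinarith) (by positivity)
  have hσ : 0 ≤ log (Q / S ^ 2) := log_nonneg ((one_le_div (by positivity)).2 hSQ)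
  have hmgf := mgf_gaussianReal hX
  rw [Real.coe_toNNReal _ hσ] at hmgf
  constructor
  · calc ∫ ω, exp (X ω) ∂P = mgf X P 1 := by simp [mgf]
      _ = exp (log S) := by rw [hmgf]; ring_nf
      _ = S := exp_log hS
  · calc ∫ ω, exp (X ω) ^ 2 ∂P = mgf X P 2 := by simp [mgf, ← exp_nat_mul]
      _ = exp (log S) ^ 2 * exp (log (Q / S ^ 2)) := by
        rw [hmgf, ← exp_nat_mul, ← exp_add]; ring_nf
      _ = Q := by rw [exp_log hS, exp_log hQS]; field_simp

theorem lognormal_moment_matching_general {Ω Ω' : Type*} [MeasureSpace Ω] [MeasureSpace Ω']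
    (r : Ω → ℝ) (m s : ℝ)
    (hr : Measure.map r ℙ = gaussianReal m ⟨s ^ 2, sq_nonneg s⟩)
    (a b c d : ℝ)
    (Y : Ω → ℝ) (hY : Y = fun ω => Real.exp (a * r ω + b) + Real.exp (c * r ω + d))
    (μ₁ σ₁sq μ₂ σ₂sq Cov σXsq μX : ℝ)
    (hμ₁ : μ₁ = a * m + b) (hσ₁ : σ₁sq = a ^ 2 * s ^ 2)
    (hμ₂ : μ₂ = c * m + d) (hσ₂ : σ₂sq = c ^ 2 * s ^ 2)
    (hCov : Cov = a * c * s ^ 2)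
    (hσX : σXsq = Real.log
      ((Real.exp (2 * μ₁ + 2 * σ₁sq) +
          2 * Real.exp (μ₁ + μ₂ + (σ₁sq + σ₂sq + 2 * Cov) / 2) +
          Real.exp (2 * μ₂ + 2 * σ₂sq)) /
        (Real.exp (μ₁ + σ₁sq / 2) + Real.exp (μ₂ + σ₂sq / 2)) ^ 2))
    (hμX : μX = Real.log (Real.exp (μ₁ + σ₁sq / 2) + Real.exp (μ₂ + σ₂sq / 2)) - σXsq / 2) :
    0 ≤ σXsq ∧
    ∀ (X : Ω' → ℝ), Measure.map X ℙ = gaussianReal μX σXsq.toNNReal →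
      (∫ ω', Real.exp (X ω') ∂ℙ) = (∫ ω, Y ω ∂ℙ) ∧
      (∫ ω', Real.exp (X ω') ^ 2 ∂ℙ) = (∫ ω, Y ω ^ 2 ∂ℙ) := by
  subst hY hμX hσX hμ₁ hσ₁ hμ₂ hσ₂ hCov
  set v : ℝ≥0 := ⟨s ^ 2, sq_nonneg s⟩
  have hv : (v : ℝ) = s ^ 2 := rfl
  have hEY := integral_exp_add_exp_of_map_eq_gaussianReal hr a b c d
  have hEY2 := integral_exp_add_exp_sq_of_map_eq_gaussianReal hr a b c d
  rw [hv] at hEY hEY2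
  have hSQ := exp_add_exp_sq_le (a * m + b) (c * m + d) (a * s) (c * s)
  simp only [mul_pow, mul_mul_mul_comm a s c s, ← sq] at hSQ
  refine ⟨log_nonneg ((one_le_div (by positivity)).2 hSQ), fun X hX ↦ ?_⟩
  beta_reduce
  rw [hEY, hEY2]
  exact integral_exp_eq_and_integral_exp_sq_eq_of_map_eq_gaussianReal (by positivity) hSQ hX

/-- Moment matching of a sum of two correlated lognormals `Y = e^{a·r+b} + e^{c·r+d}`
(`r ~ N(m, s²)`, `(a,c) ≠ (0,0)`) by a single lognormal `Z = e^X`,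
`X ~ N(μ_X, σ_X²)`: the matching parameters satisfy `σ_X² ≥ 0` and the first two
moments agree, `E[Z] = E[Y]` and `E[Z²] = E[Y²]`. -/
theorem lognormal_moment_matching {Ω Ω' : Type*} [MeasureSpace Ω] [MeasureSpace Ω']
    [IsProbabilityMeasure (ℙ : Measure Ω)] [IsProbabilityMeasure (ℙ : Measure Ω')]
    (r : Ω → ℝ) (m s : ℝ) (hs : 0 < s ^ 2)
    (hr : Measure.map r ℙ = gaussianReal m ⟨s ^ 2, sq_nonneg s⟩)
    (a b c d : ℝ) (hac : (a, c) ≠ ((0 : ℝ), (0 : ℝ)))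
    (Y : Ω → ℝ) (hY : Y = fun ω => Real.exp (a * r ω + b) + Real.exp (c * r ω + d))
    (μ₁ σ₁sq μ₂ σ₂sq Cov σXsq μX : ℝ)
    (hμ₁ : μ₁ = a * m + b) (hσ₁ : σ₁sq = a ^ 2 * s ^ 2)
    (hμ₂ : μ₂ = c * m + d) (hσ₂ : σ₂sq = c ^ 2 * s ^ 2)
    (hCov : Cov = a * c * s ^ 2)
    (hσX : σXsq = Real.log
      ((Real.exp (2 * μ₁ + 2 * σ₁sq) +
          2 * Real.exp (μ₁ + μ₂ + (σ₁sq + σ₂sq + 2 * Cov) / 2) +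
          Real.exp (2 * μ₂ + 2 * σ₂sq)) /
        (Real.exp (μ₁ + σ₁sq / 2) + Real.exp (μ₂ + σ₂sq / 2)) ^ 2))
    (hμX : μX = Real.log (Real.exp (μ₁ + σ₁sq / 2) + Real.exp (μ₂ + σ₂sq / 2)) - σXsq / 2) :
    0 ≤ σXsq ∧
    ∀ (X : Ω' → ℝ), Measure.map X ℙ = gaussianReal μX σXsq.toNNReal →
      (∫ ω', Real.exp (X ω') ∂ℙ) = (∫ ω, Y ω ∂ℙ) ∧
      (∫ ω', Real.exp (X ω') ^ 2 ∂ℙ) = (∫ ω, Y ω ^ 2 ∂ℙ) :=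
  lognormal_moment_matching_general r m s hr a b c d Y hY μ₁ σ₁sq μ₂ σ₂sq Cov σXsq μX hμ₁ hσ₁ hμ₂
    hσ₂ hCov hσX hμX
end

section
/- Let μ ∈ ℝ, σ > 0, K > 0. Then ∫ max(e^x - K, 0) d(gaussianReal μ σ²)(x) = M₁·Φ(d₁) - K·Φ(d₂), where M₁ = e^{μ + σ²/2}, d₁ = (log(M₁/K) + σ²/2)/σ, d₂ = (log(M₁/K) - σ²/2)/σ, and Φ is the cumulative distribution function of the standard normal distribution. -/
/-!
On `{x ≥ log K}` the payoff is `eˣ - K` and elsewhere it vanishes. Completing the square, the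
`N(μ, v)` density times `eˣ` is `e^{μ + v/2}` times the `N(μ + v, v)` density, so both terms of
the expectation are Gaussian tail probabilities of `[log K, ∞)`, which standardize to `Φ(d₁)`
and `Φ(d₂)`.
-/

open MeasureTheory ProbabilityTheory Real Set
open scoped NNReal

lemma max_exp_sub_zero_eq_indicator {K : ℝ} (hK : 0 < K) (x : ℝ) :
    max (exp x - K) 0 = (Ici (log K)).indicator (fun x ↦ exp x - K) x := by
  by_cases hx : x ∈ Ici (log K)
  · rw [indicator_of_mem hx, max_eq_left]
    simpa [exp_log hK] using exp_le_exp.2 (mem_Ici.1 hx)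
  · rw [indicator_of_notMem hx, max_eq_right]
    simpa [exp_log hK] using exp_le_exp.2 (not_le.1 hx).le

namespace ProbabilityTheory

lemma gaussianPDFReal_mul_exp (μ : ℝ) (v : ℝ≥0) (x : ℝ) :
    gaussianPDFReal μ v x * exp x = exp (μ + v / 2) * gaussianPDFReal (μ + v) v x := by
  by_cases hv : v = 0
  · simp [hv, gaussianPDFReal_zero_var]
  simp only [gaussianPDFReal_def]
  rw [mul_left_comm, mul_assoc, ← exp_add, ← exp_add]
  congr 2
  field_simp
  ring

lemma measureReal_gaussianReal (μ : ℝ) {v : ℝ≥0} (hv : v ≠ 0) (s : Set ℝ) :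
    (gaussianReal μ v).real s = ∫ x in s, gaussianPDFReal μ v x := by
  rw [measureReal_def, gaussianReal_apply_eq_integral μ hv,
    ENNReal.toReal_ofReal (setIntegral_nonneg_of_ae (ae_of_all _ (gaussianPDFReal_nonneg μ v)))]

lemma setIntegral_exp_gaussianReal (μ : ℝ) {v : ℝ≥0} (hv : v ≠ 0) {s : Set ℝ}
    (hs : MeasurableSet s) :
    ∫ x in s, exp x ∂gaussianReal μ v = exp (μ + v / 2) * (gaussianReal (μ + v) v).real s := by
  rw [measureReal_gaussianReal _ hv, ← integral_const_mul, ← integral_indicator hs,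
    ← integral_indicator hs, integral_gaussianReal_eq_integral_smul hv]
  congr with x
  simp only [smul_eq_mul, ← indicator_mul_right, gaussianPDFReal_mul_exp]

lemma gaussianReal_map_const_sub_sqrt_mul (μ : ℝ) (v : ℝ≥0) :
    (gaussianReal 0 1).map (fun y ↦ μ - √v * y) = gaussianReal μ v := by
  change (gaussianReal 0 1).map ((μ - ·) ∘ (√v * ·)) = _
  rw [← Measure.map_map (measurable_const_sub μ) (measurable_const_mul _),
    gaussianReal_map_const_mul, gaussianReal_map_const_sub]
  congr
  · simp
  · ext; simp

lemma measureReal_gaussianReal_Ici (μ : ℝ) {v : ℝ≥0} (hv : v ≠ 0) (c : ℝ) :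
    (gaussianReal μ v).real (Ici c) = cdf (gaussianReal 0 1) ((μ - c) / √v) := by
  have hσ : 0 < √(v : ℝ) := sqrt_pos.2 (by positivity)
  rw [← gaussianReal_map_const_sub_sqrt_mul, map_measureReal_apply (by fun_prop) measurableSet_Ici,
    cdf_eq_real]
  congr 1
  ext y
  simp only [mem_preimage, mem_Ici, mem_Iic, le_div_iff₀ hσ]
  constructor <;> intro h <;> linarith

lemma integral_max_exp_sub_gaussianReal (μ : ℝ) {v : ℝ≥0} (hv : v ≠ 0) {K : ℝ} (hK : 0 < K) :
    ∫ x, max (exp x - K) 0 ∂gaussianReal μ v =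
      exp (μ + v / 2) * cdf (gaussianReal 0 1) ((μ + v - log K) / √v) -
        K * cdf (gaussianReal 0 1) ((μ - log K) / √v) := by
  have hexp : Integrable exp (gaussianReal μ v) := by
    simpa using integrable_exp_mul_gaussianReal (μ := μ) (v := v) 1
  simp_rw [max_exp_sub_zero_eq_indicator hK]
  rw [integral_indicator measurableSet_Ici,
    integral_sub hexp.integrableOn (integrable_const K).integrableOn,
    setIntegral_exp_gaussianReal μ hv measurableSet_Ici, setIntegral_const, smul_eq_mul,
    measureReal_gaussianReal_Ici _ hv, measureReal_gaussianReal_Ici _ hv, mul_comm _ K]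

end ProbabilityTheory

/-- Black–Scholes–Merton call expectation: for a lognormal underlying `e^x`,
`x ~ N(μ, σ²)`, and strike `K > 0`,
`E[(e^x - K)⁺] = M₁·Φ(d₁) - K·Φ(d₂)` with `M₁ = e^{μ + σ²/2}`,
`d₁ = (log(M₁/K) + σ²/2)/σ`, `d₂ = (log(M₁/K) - σ²/2)/σ`,
and `Φ` the standard normal CDF. -/
theorem blackScholes_call_expectation (μ σ K : ℝ) (hσ : 0 < σ) (hK : 0 < K)
    (Φ : ℝ → ℝ) (hΦ : Φ = fun x => ProbabilityTheory.cdf (gaussianReal 0 1) x)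
    (M₁ d₁ d₂ : ℝ)
    (hM₁ : M₁ = Real.exp (μ + σ ^ 2 / 2))
    (hd₁ : d₁ = (Real.log (M₁ / K) + σ ^ 2 / 2) / σ)
    (hd₂ : d₂ = (Real.log (M₁ / K) - σ ^ 2 / 2) / σ) :
    ∫ x, max (Real.exp x - K) 0 ∂(gaussianReal μ ⟨σ ^ 2, sq_nonneg σ⟩) =
      M₁ * Φ d₁ - K * Φ d₂ := by
  set v : ℝ≥0 := ⟨σ ^ 2, sq_nonneg σ⟩
  have hv_coe : (v : ℝ) = σ ^ 2 := rfl
  have hv : v ≠ 0 := by simp [← NNReal.coe_ne_zero, hv_coe, hσ.ne']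
  have hlog : log (M₁ / K) = μ + σ ^ 2 / 2 - log K := by
    rw [hM₁, log_div (exp_ne_zero _) hK.ne', log_exp]
  rw [integral_max_exp_sub_gaussianReal μ hv hK, hΦ, hd₁, hd₂, hlog, hM₁, hv_coe,
    sqrt_sq hσ.le]
  congr 3 <;> field_simp <;> ring
end
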